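/- Let A be a finite alphabet with |A| ≥ 2, k a positive integer, and let X ⊆ A* be a regular F̲_k-independent code. The following are equivalent: (i) X is maximal in the family of F̲_k-independent codes; (ii) X is complete; (iii) μ(X) = 1, where μ is the uniform Bernoulli measure. Moreover, every regular F̲_k-independent code can be embedded into a code that is maximal in the family of F̲_k-independent codes. -/

import Mathlib

open scoped ENNReal

/-- Length of a longest common prefix of `w` and `w'`. -/
noncomputable def lcpLen {A : Type*} (w w' : List A) : ℕ :=
  sSup {n | ∃ p : List A, p.length = n ∧ p <+: w ∧ p <+: w'}

/-- The prefix distance `d_P(w,w') = |w| + |w'| - 2|w ∧ w'|`. -/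
noncomputable def dP {A : Type*} (w w' : List A) : ℕ :=
  w.length + w'.length - 2 * lcpLen w w'

/-- Length of a longest common suffix of `w` and `w'`. -/
noncomputable def lcsLen {A : Type*} (w w' : List A) : ℕ :=
  sSup {n | ∃ s : List A, s.length = n ∧ s <:+ w ∧ s <:+ w'}

/-- The suffix distance `d_S(w,w') = |w| + |w'| - 2|s|`. -/
noncomputable def dS {A : Type*} (w w' : List A) : ℕ :=
  w.length + w'.length - 2 * lcsLen w w'

/-- Length of a longest common factor of `w` and `w'`. -/
noncomputable def lcfLen {A : Type*} (w w' : List A) : ℕ :=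
  sSup {n | ∃ f : List A, f.length = n ∧ f <:+: w ∧ f <:+: w'}

/-- The factor distance `d_F(w,w') = |w| + |w'| - 2|f|`,
`f` a maximum-length common factor. -/
noncomputable def dF {A : Type*} (w w' : List A) : ℕ :=
  w.length + w'.length - 2 * lcfLen w w'

/-- `n`-fold composition of a binary relation. -/
def relPow {α : Type*} (r : α → α → Prop) : ℕ → α → α → Prop
  | 0 => Eq
  | n + 1 => Relation.Comp (relPow r n) r

/-- `X` is a (variable-length) code: every word of `X*` factorizes uniquely over `X`. -/
def IsCode {A : Type*} (X : Set (List A)) : Prop :=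
  ∀ l m : List (List A), (∀ x ∈ l, x ∈ X) → (∀ x ∈ m, x ∈ X) →
    l.flatten = m.flatten → l = m

/-- `X` is complete: every word is a factor of some word of `X*`. -/
def IsCompleteSet {A : Type*} (X : Set (List A)) : Prop :=
  ∀ w : List A, ∃ l : List (List A), (∀ x ∈ l, x ∈ X) ∧ w <:+: l.flatten

/-- `X ⊆ A*` is a regular language: accepted by a finite deterministic automaton. -/
def IsRegularLang {A : Type*} (X : Set (List A)) : Prop :=
  ∃ (Q : Type) (_ : Fintype Q) (M : DFA A Q), M.accepts = X

/-- The uniform Bernoulli measure `μ(X) = Σ_{x ∈ X} |A|^{-|x|}`. -/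
noncomputable def mu (A : Type*) [Fintype A] (X : Set (List A)) : ℝ≥0∞ :=
  ∑' x : X, ((Fintype.card A : ℝ≥0∞))⁻¹ ^ (x : List A).length

/-!
Every code has `μ(X) ≤ 1` (Kraft–McMillan), so a code of measure one has no proper extension to a
code. If `X` is complete and accepted by an automaton with `N` states, every word `w` can be
completed to `u w v ∈ X*` with `|u|, |v| ≤ N`; the map `w ↦ (|u|, |v|, factorisation of u w v)` is
injective, so the divergent series `∑_w μ(w)` is bounded by a multiple of `∑_n μ(X)^n`, which forces
`μ(X) = 1`. If `X` is not complete, some word `w` is not a factor of `X*`, and the word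
`a^k w a^M b^M` can be added to `X` without destroying the code property or `F̲_k`-independence,
so `X` is not maximal. The embedding into a maximal code is the Teichmüller–Tukey lemma, both
properties being of finite character.
-/

open List

section Basic
variable {A : Type*}

lemma isCode_of_subset {X Y : Set (List A)} (hXY : X ⊆ Y) (hY : IsCode Y) : IsCode X :=
  fun l m hl hm => hY l m (fun x hx => hXY (hl x hx)) (fun x hx => hXY (hm x hx))

lemma lcfLen_le {w w' : List A} {B : ℕ}
    (h : ∀ f : List A, f <:+: w → f <:+: w' → f.length ≤ B) : lcfLen w w' ≤ B :=
  csSup_le ⟨0, [], rfl, nil_infix, nil_infix⟩ fun _ ⟨f, hf, h1, h2⟩ => hf ▸ h f h1 h2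

lemma dF_comm (w w' : List A) : dF w w' = dF w' w := by
  simp only [dF, lcfLen, and_comm (a := _ <:+: w), add_comm w.length]

lemma lt_dF_of_forall_infix {k : ℕ} {y x : List A}
    (h : ∀ f : List A, f <:+: y → f <:+: x → f.length + k < y.length) : k < dF y x := by
  have hk : k < y.length := by simpa using h [] nil_infix nil_infix
  have hx : lcfLen y x ≤ x.length := lcfLen_le fun f _ hf => hf.length_le
  have hy : lcfLen y x ≤ y.length - k - 1 := lcfLen_le fun f hfy hfx => by
    have := h f hfy hfx; omega
  unfold dF
  omega

lemma pairwise_lt_dF_iff {k : ℕ} {Y : Set (List A)} :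
    Y.Pairwise (fun x y => k < dF x y) ↔ ¬ ∃ x ∈ Y, ∃ y ∈ Y, x ≠ y ∧ dF x y ≤ k := by
  simp [Set.Pairwise]

end Basic

lemma ENNReal.tsum_pow {ι : Type*} (f : ι → ℝ≥0∞) :
    ∀ n : ℕ, (∑' i, f i) ^ n = ∑' g : Fin n → ι, ∏ i, f (g i)
  | 0 => by simp
  | n + 1 => by
    rw [← (Fin.consEquiv fun _ => ι).tsum_eq, ENNReal.tsum_prod', pow_succ',
      ← ENNReal.tsum_mul_right]
    refine tsum_congr fun a => ?_
    simp only [Fin.consEquiv_apply, Fin.prod_univ_succ, Fin.cons_zero, Fin.cons_succ,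
      ENNReal.tsum_mul_left, ENNReal.tsum_pow f n]

section Measure
variable {A : Type*} [Fintype A]

noncomputable def muWord (A : Type*) [Fintype A] (w : List A) : ℝ≥0∞ :=
  (Fintype.card A : ℝ≥0∞)⁻¹ ^ w.length

lemma muWord_append (u v : List A) : muWord A (u ++ v) = muWord A u * muWord A v := by
  simp only [muWord, length_append, pow_add]

lemma muWord_ne_zero (w : List A) : muWord A w ≠ 0 :=
  pow_ne_zero _ (ENNReal.inv_ne_zero.mpr (ENNReal.natCast_ne_top _))

lemma muWord_le_pow_mul_muWord_append [Nonempty A] {n : ℕ} (u w v : List A)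
    (hu : u.length ≤ n) (hv : v.length ≤ n) :
    muWord A w ≤ (Fintype.card A : ℝ≥0∞) ^ (2 * n) * muWord A (u ++ w ++ v) := by
  set c := (Fintype.card A : ℝ≥0∞)
  have hc : 1 ≤ c := Nat.one_le_cast.mpr Fintype.card_pos
  have hcancel : ∀ x : List A, c ^ x.length * muWord A x = 1 := fun x => by
    rw [muWord, ← mul_pow, ENNReal.mul_inv_cancel (by positivity) (ENNReal.natCast_ne_top _),
      one_pow]
  calc muWord A w = c ^ u.length * muWord A u * (c ^ v.length * muWord A v) * muWord A w := by
        rw [hcancel, hcancel, one_mul, one_mul]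
    _ = c ^ (u.length + v.length) * muWord A (u ++ w ++ v) := by
        rw [muWord_append, muWord_append, pow_add]; ring
    _ ≤ c ^ (2 * n) * muWord A (u ++ w ++ v) :=
        mul_le_mul_left (pow_le_pow_right₀ hc (by omega)) _

lemma mu_eq_tsum_muWord (X : Set (List A)) : mu A X = ∑' x : X, muWord A x := rfl

lemma tsum_muWord_eq_top [Nonempty A] : ∑' w : List A, muWord A w = ⊤ := by
  have hc : (Fintype.card A : ℝ≥0∞) ≠ 0 := by simp
  calc ∑' w : List A, muWord A w
      = ∑' p : Σ n, Fin n → A, (Fintype.card A : ℝ≥0∞)⁻¹ ^ p.1 := by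
        rw [← List.equivSigmaTuple.symm.tsum_eq]
        simp [muWord, List.equivSigmaTuple]
    _ = ∑' _ : ℕ, (1 : ℝ≥0∞) := by
        rw [ENNReal.tsum_sigma']
        refine tsum_congr fun n => ?_
        dsimp only
        rw [tsum_fintype, Finset.sum_const, Finset.card_univ, Fintype.card_fun, Fintype.card_fin,
          nsmul_eq_mul, Nat.cast_pow, ← mul_pow,
          ENNReal.mul_inv_cancel hc (ENNReal.natCast_ne_top _), one_pow]
    _ = ⊤ := ENNReal.tsum_const_eq_top_of_ne_zero one_ne_zero

lemma mu_le_one_of_isCode [Nonempty A] {X : Set (List A)} (hX : IsCode X) : mu A X ≤ 1 := by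
  rw [mu, ENNReal.tsum_eq_iSup_sum]
  refine iSup_le fun s => ?_
  have hcode : InformationTheory.UniquelyDecodable
      ((s.map (Function.Embedding.subtype _) : Finset (List A)) : Set (List A)) :=
    isCode_of_subset (fun x hx => by
      obtain ⟨x, -, rfl⟩ := Finset.mem_map.mp hx
      exact x.2) hX
  have hkraft := InformationTheory.kraft_mcmillan_inequality hcode
  rw [Finset.sum_map] at hkraft
  calc ∑ x ∈ s, (Fintype.card A : ℝ≥0∞)⁻¹ ^ (x : List A).length
      = ENNReal.ofReal (∑ x ∈ s, (1 / Fintype.card A : ℝ) ^ (x : List A).length) := by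
        rw [ENNReal.ofReal_sum_of_nonneg fun _ _ => by positivity]
        refine Finset.sum_congr rfl fun x _ => ?_
        rw [ENNReal.ofReal_pow (by positivity), one_div,
          ENNReal.ofReal_inv_of_pos (by exact_mod_cast Fintype.card_pos), ENNReal.ofReal_natCast]
    _ ≤ 1 := ENNReal.ofReal_le_one.mpr hkraft

lemma mu_insert {X : Set (List A)} {y : List A} (hy : y ∉ X) :
    mu A (insert y X) = muWord A y + mu A X := by
  rw [mu_eq_tsum_muWord, mu_eq_tsum_muWord, Set.insert_eq,
    ENNReal.summable.tsum_union_disjoint (Set.disjoint_singleton_left.mpr hy) ENNReal.summable,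
    tsum_singleton]

lemma eq_of_mu_eq_one_of_subset [Nonempty A] {X Y : Set (List A)} (hX : mu A X = 1)
    (hY : IsCode Y) (hXY : X ⊆ Y) : Y = X := by
  refine Set.Subset.antisymm (fun y hyY => ?_) hXY
  by_contra hyX
  have h : muWord A y + 1 ≤ 0 + 1 :=
    calc muWord A y + 1 = mu A (insert y X) := by rw [mu_insert hyX, hX]
      _ ≤ mu A Y := ENNReal.tsum_mono_subtype (muWord A) (Set.insert_subset hyY hXY)
      _ ≤ 1 := mu_le_one_of_isCode hY
      _ = 0 + 1 := (zero_add 1).symm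
  exact muWord_ne_zero y
    (nonpos_iff_eq_zero.mp ((ENNReal.add_le_add_iff_right ENNReal.one_ne_top).mp h))

lemma muWord_flatten (L : List (List A)) : muWord A L.flatten = (L.map (muWord A)).prod := by
  induction L with
  | nil => simp [muWord]
  | cons x L ih => rw [flatten_cons, muWord_append, ih, map_cons, prod_cons]

lemma tsum_muWord_flatten (X : Set (List A)) :
    ∑' l : List X, muWord A (l.map Subtype.val).flatten = ∑' n : ℕ, mu A X ^ n := by
  rw [← List.equivSigmaTuple.symm.tsum_eq, ENNReal.tsum_sigma']
  refine tsum_congr fun n => ?_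
  simp only [List.equivSigmaTuple, Equiv.coe_fn_symm_mk, muWord_flatten, map_ofFn, prod_ofFn,
    Function.comp_apply]
  exact (ENNReal.tsum_pow (fun x : X => muWord A x) n).symm

end Measure

namespace DFA
variable {α σ : Type*} [Fintype σ] (M : DFA α σ)

lemma exists_length_lt_evalFrom_eq (s : σ) (x : List α) :
    ∃ y : List α, y.length < Fintype.card σ ∧ M.evalFrom s y = M.evalFrom s x := by
  induction hn : x.length using Nat.strong_induction_on generalizing x with
  | _ n ih =>
    by_cases hx : x.length < Fintype.card σ
    · exact ⟨x, hx, rfl⟩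
    obtain ⟨q, a, b, c, rfl, -, hb, ha, -, hc⟩ := M.evalFrom_split (not_lt.mp hx) rfl
    have hlen : (a ++ c).length < n := by
      simp only [← hn, length_append]
      have := length_pos_iff.mpr hb
      omega
    obtain ⟨y, hy, hyac⟩ := ih _ hlen (a ++ c) rfl
    exact ⟨y, hy, by rw [hyac, evalFrom_of_append, ha, hc]⟩

lemma exists_short_prefix_mem_accepts {p s : List α} (h : p ++ s ∈ M.accepts) :
    ∃ p' : List α, p'.length < Fintype.card σ ∧ p' ++ s ∈ M.accepts := by
  obtain ⟨p', hp', he⟩ := M.exists_length_lt_evalFrom_eq M.start p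
  refine ⟨p', hp', ?_⟩
  rw [mem_accepts, eval, evalFrom_of_append, he, ← evalFrom_of_append]
  exact h

lemma exists_short_suffix_mem_accepts {p s : List α} (h : p ++ s ∈ M.accepts) :
    ∃ s' : List α, s'.length < Fintype.card σ ∧ p ++ s' ∈ M.accepts := by
  obtain ⟨s', hs', he⟩ := M.exists_length_lt_evalFrom_eq (M.eval p) s
  refine ⟨s', hs', ?_⟩
  rw [mem_accepts, eval, evalFrom_of_append, ← eval, he, eval, ← evalFrom_of_append]
  exact h

end DFA

section Context
variable {A : Type*} {X : Set (List A)} {N : ℕ}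

lemma exists_flatten_eq_short_prefix_append
    (hX : ∀ p s, p ++ s ∈ X → ∃ p', p'.length ≤ N ∧ p' ++ s ∈ X) :
    ∀ (l : List (List A)), (∀ x ∈ l, x ∈ X) → ∀ u s, l.flatten = u ++ s →
      ∃ (u' : List A) (l' : List (List A)), u'.length ≤ N ∧ (∀ x ∈ l', x ∈ X) ∧ l'.flatten = u' ++ s
  | [], _, u, s, h => ⟨[], [], Nat.zero_le N, by simp, by simp [(append_eq_nil_iff.mp h.symm).2]⟩
  | x :: l, hl, u, s, h => by
    rw [flatten_cons, append_eq_append_iff] at h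
    rcases h with ⟨a, rfl, h⟩ | ⟨c, rfl, rfl⟩
    · exact exists_flatten_eq_short_prefix_append hX l (fun y hy => hl y (mem_cons_of_mem x hy))
        a s h
    · obtain ⟨p, hp, hpc⟩ := hX u c (hl _ mem_cons_self)
      refine ⟨p, (p ++ c) :: l, hp, ?_, by simp⟩
      rintro y (_ | ⟨_, hy⟩)
      exacts [hpc, hl y (mem_cons_of_mem _ hy)]

lemma exists_flatten_eq_append_short_suffix
    (hX : ∀ p s, p ++ s ∈ X → ∃ s', s'.length ≤ N ∧ p ++ s' ∈ X) :
    ∀ (l : List (List A)), (∀ x ∈ l, x ∈ X) → ∀ p v, l.flatten = p ++ v →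
      ∃ (v' : List A) (l' : List (List A)), v'.length ≤ N ∧ (∀ x ∈ l', x ∈ X) ∧ l'.flatten = p ++ v'
  | [], _, p, v, h => ⟨[], [], Nat.zero_le N, by simp, by simp [(append_eq_nil_iff.mp h.symm).1]⟩
  | x :: l, hl, p, v, h => by
    rw [flatten_cons, append_eq_append_iff] at h
    rcases h with ⟨a, rfl, h⟩ | ⟨c, rfl, rfl⟩
    · obtain ⟨v', l', hv', hl', hfl⟩ := exists_flatten_eq_append_short_suffix hX l
        (fun y hy => hl y (mem_cons_of_mem x hy)) a v h
      refine ⟨v', x :: l', hv', ?_, by simp [hfl]⟩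
      rintro y (_ | ⟨_, hy⟩)
      exacts [hl _ mem_cons_self, hl' y hy]
    · obtain ⟨s, hs, hps⟩ := hX p c (hl _ mem_cons_self)
      exact ⟨s, [p ++ s], hs, by simpa using hps, by simp⟩

lemma exists_short_context_of_infix
    (hpre : ∀ p s, p ++ s ∈ X → ∃ p', p'.length ≤ N ∧ p' ++ s ∈ X)
    (hsuf : ∀ p s, p ++ s ∈ X → ∃ s', s'.length ≤ N ∧ p ++ s' ∈ X)
    {l : List (List A)} (hl : ∀ x ∈ l, x ∈ X) {w : List A} (hw : w <:+: l.flatten) :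
    ∃ (u v : List A) (l' : List X), u.length ≤ N ∧ v.length ≤ N ∧
      (l'.map Subtype.val).flatten = u ++ w ++ v := by
  obtain ⟨s, t, hst⟩ := hw
  obtain ⟨v, l₁, hv, hl₁, h₁⟩ := exists_flatten_eq_append_short_suffix hsuf l hl (s ++ w) t hst.symm
  obtain ⟨u, l₂, hu, hl₂, h₂⟩ :=
    exists_flatten_eq_short_prefix_append hpre l₁ hl₁ s (w ++ v) (by rw [h₁, append_assoc])
  lift l₂ to List X using hl₂
  exact ⟨u, v, l₂, hu, hv, by rw [h₂, append_assoc]⟩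

lemma exists_short_context_of_isRegularLang (hreg : IsRegularLang X) (hc : IsCompleteSet X) :
    ∃ N, ∀ w : List A, ∃ (u v : List A) (l : List X), u.length ≤ N ∧ v.length ≤ N ∧
      (l.map Subtype.val).flatten = u ++ w ++ v := by
  obtain ⟨σ, _, M, rfl⟩ := hreg
  refine ⟨Fintype.card σ, fun w => ?_⟩
  obtain ⟨l, hl, hw⟩ := hc w
  exact exists_short_context_of_infix
    (fun _ _ h => (M.exists_short_prefix_mem_accepts h).imp fun _ h => ⟨h.1.le, h.2⟩)
    (fun _ _ h => (M.exists_short_suffix_mem_accepts h).imp fun _ h => ⟨h.1.le, h.2⟩) hl hw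

end Context

section Complete
variable {A : Type*} [Fintype A] {X : Set (List A)}

lemma tsum_muWord_ne_top_of_short_context [Nonempty A] {N : ℕ}
    (h : ∀ w : List A, ∃ (u v : List A) (l : List X), u.length ≤ N ∧ v.length ≤ N ∧
      (l.map Subtype.val).flatten = u ++ w ++ v)
    (hX : ∑' l : List X, muWord A (l.map Subtype.val).flatten ≠ ⊤) :
    ∑' w : List A, muWord A w ≠ ⊤ := by
  choose u v l hu hv hflat using h
  set c := (Fintype.card A : ℝ≥0∞)
  set G : Fin (N + 1) × Fin (N + 1) × List X → ℝ≥0∞ :=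
    fun p => muWord A (p.2.2.map Subtype.val).flatten
  -- `w` is recovered from its context `u w v` and the lengths of `u` and `v`
  let Φ : List A → Fin (N + 1) × Fin (N + 1) × List X := fun w =>
    (⟨(u w).length, Nat.lt_succ_of_le (hu w)⟩, ⟨(v w).length, Nat.lt_succ_of_le (hv w)⟩, l w)
  have hΦ : Function.Injective Φ := fun w w' he => by
    simp only [Φ, Prod.mk.injEq, Fin.mk.injEq] at he
    obtain ⟨hu', hv', hl'⟩ := he
    have := (hflat w).symm.trans (hl' ▸ hflat w')
    exact (List.append_inj (List.append_inj' this hv').1 hu').2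
  have hG : ∑' p, G p ≠ ⊤ := by
    simp only [G, ENNReal.tsum_prod', ENNReal.tsum_const]
    exact ENNReal.mul_ne_top (by simp) (ENNReal.mul_ne_top (by simp) hX)
  refine ne_top_of_le_ne_top (ENNReal.mul_ne_top (ENNReal.pow_ne_top (ENNReal.natCast_ne_top _)) hG)
    (b := c ^ (2 * N) * ∑' p, G p) ?_
  calc ∑' w, muWord A w ≤ ∑' w, c ^ (2 * N) * G (Φ w) := ENNReal.tsum_le_tsum fun w =>
        (muWord_le_pow_mul_muWord_append (u w) w (v w) (hu w) (hv w)).trans_eq (by rw [← hflat w])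
    _ = c ^ (2 * N) * ∑' w, G (Φ w) := ENNReal.tsum_mul_left
    _ ≤ c ^ (2 * N) * ∑' p, G p := mul_le_mul_right (ENNReal.tsum_comp_le_tsum_of_injective hΦ G) _

lemma mu_eq_one_of_isCompleteSet [Nonempty A] (hreg : IsRegularLang X) (hX : IsCode X)
    (hc : IsCompleteSet X) : mu A X = 1 := by
  refine (mu_le_one_of_isCode hX).antisymm (not_lt.mp fun hlt => ?_)
  obtain ⟨N, hN⟩ := exists_short_context_of_isRegularLang hreg hc
  refine tsum_muWord_ne_top_of_short_context hN ?_ tsum_muWord_eq_top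
  rw [tsum_muWord_flatten, ENNReal.tsum_geometric]
  exact ENNReal.inv_ne_top.mpr (tsub_pos_of_lt hlt).ne'

end Complete

section Extension
variable {A : Type*} {X : Set (List A)} {w y : List A}

lemma forall_mem_or_eq_append_cons_of_forall_mem_insert {l : List (List A)}
    (hl : ∀ x ∈ l, x ∈ insert y X) :
    (∀ x ∈ l, x ∈ X) ∨ ∃ l₀ l₁, l = l₀ ++ y :: l₁ ∧ ∀ x ∈ l₀, x ∈ X := by
  by_cases hyl : y ∈ l
  · obtain ⟨l₀, l₁, rfl, hy₀⟩ := eq_append_cons_of_mem hyl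
    exact .inr ⟨l₀, l₁, rfl, fun x hx =>
      (hl x (mem_append_left _ hx)).resolve_left (ne_of_mem_of_not_mem hx hy₀)⟩
  · exact .inl fun x hx => (hl x hx).resolve_left (ne_of_mem_of_not_mem hx hyl)

lemma eq_nil_of_append_append_eq (hwy : w <:+: y)
    (hy : ∀ r t, y = r ++ t → r ≠ [] → t <+: y → w <:+: r) {r L M : List A}
    (hr : ¬ w <:+: r) (h : r ++ (y ++ M) = y ++ L) : r = [] := by
  by_contra hr₀
  rcases append_eq_append_iff.mp h with ⟨t, rfl, ht⟩ | ⟨c, rfl, -⟩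
  · have htr : t <+: r ++ t := prefix_of_prefix_length_le
      (ht ▸ prefix_append t L) (prefix_append _ M) (by simp)
    exact hr (hy r t rfl hr₀ htr)
  · exact hr (hwy.trans (prefix_append y c).isInfix)

lemma isCode_insert (hX : IsCode X)
    (hw : ∀ l : List (List A), (∀ x ∈ l, x ∈ X) → ¬ w <:+: l.flatten) (hwy : w <:+: y)
    (hy : ∀ r t, y = r ++ t → r ≠ [] → t <+: y → w <:+: r) :
    IsCode (insert y X) := by
  intro l m hl hm h
  induction hn : l.length using Nat.strong_induction_on generalizing l m with
  | _ n ih =>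
  have hwyl : ∀ l₀ l₁ : List (List A), w <:+: (l₀ ++ y :: l₁).flatten := fun l₀ l₁ =>
    hwy.trans (by simp)
  rcases forall_mem_or_eq_append_cons_of_forall_mem_insert hl with hlX | ⟨l₀, l₁, rfl, hl₀⟩ <;>
    rcases forall_mem_or_eq_append_cons_of_forall_mem_insert hm with hmX | ⟨m₀, m₁, rfl, hm₀⟩
  · exact hX l m hlX hmX h
  · exact absurd (h ▸ hwyl m₀ m₁) (hw l hlX)
  · exact absurd (h ▸ hwyl l₀ l₁) (hw m hmX)
  have h' : l₀.flatten ++ (y ++ l₁.flatten) = m₀.flatten ++ (y ++ m₁.flatten) := by simpa using h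
  -- the first occurrences of `y` start together: otherwise the shift between them, a suffix of a
  -- word of `X*`, would contain `w`
  have h₀ : l₀.flatten = m₀.flatten := by
    rcases append_eq_append_iff.mp h' with ⟨r, hr, hr'⟩ | ⟨r, hr, hr'⟩
    · have : r = [] := eq_nil_of_append_append_eq hwy hy
        (fun hwr => hw m₀ hm₀ (hr ▸ hwr.trans (suffix_append _ r).isInfix)) hr'.symm
      rw [hr, this, append_nil]
    · have : r = [] := eq_nil_of_append_append_eq hwy hy
        (fun hwr => hw l₀ hl₀ (hr ▸ hwr.trans (suffix_append _ r).isInfix)) hr'.symm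
      rw [hr, this, append_nil]
  obtain rfl := hX l₀ m₀ hl₀ hm₀ h₀
  have h₁ : l₁.flatten = m₁.flatten := by simpa [h₀] using h'
  rw [ih l₁.length (by simp [← hn]; omega) l₁ m₁ (fun x hx => hl x (by simp [hx]))
    (fun x hx => hm x (by simp [hx])) h₁ rfl]

lemma infix_of_infix_append_append {P S f : List A} {k : ℕ} (hf : f <:+: P ++ w ++ S)
    (hP : k ≤ P.length) (hS : k ≤ S.length) (hlen : (P ++ w ++ S).length ≤ f.length + k) :
    w <:+: f := by
  obtain ⟨s₁, s₂, hs⟩ := hf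
  have hlen' : s₁.length + s₂.length ≤ k := by
    have := congrArg length hs
    simp only [length_append] at this hlen
    omega
  obtain ⟨P', rfl⟩ : s₁ <+: P := prefix_of_prefix_length_le
    (hs ▸ (prefix_append _ _).trans (prefix_append _ _)) ((prefix_append _ _).trans
      (prefix_append _ _)) (by omega)
  obtain ⟨S', rfl⟩ : s₂ <:+ S := suffix_of_suffix_length_le (hs ▸ suffix_append _ _)
    (suffix_append _ _) (by omega)
  have : f = P' ++ w ++ S' := append_cancel_right (by simpa [append_assoc] using hs)
  exact this ▸ infix_append P' w S'

-- `a^k w a^M b^M` with `M = k + |w|`: the margins of length at least `k` around `w` keep `w`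
-- inside every factor that is at most `k` shorter, and the block `a^M b^M` rules out
-- self-overlaps with offset below `M`.
def paddedWord (a b : A) (k : ℕ) (w : List A) : List A :=
  replicate k a ++ w ++ replicate (k + w.length) a ++ replicate (k + w.length) b

lemma infix_paddedWord (a b : A) (k : ℕ) (w : List A) : w <:+: paddedWord a b k w := by
  simp [paddedWord, append_assoc]

lemma infix_of_infix_paddedWord {a b : A} {k : ℕ} {f : List A} (hf : f <:+: paddedWord a b k w)
    (hlen : (paddedWord a b k w).length ≤ f.length + k) : w <:+: f :=
  infix_of_infix_append_append (k := k) (P := replicate k a) (S := replicate _ a ++ replicate _ b)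
    (by simpa [paddedWord, append_assoc] using hf) (by simp) (by simp; omega)
    (by simpa [paddedWord, append_assoc] using hlen)

lemma infix_of_paddedWord_eq_append {a b : A} (hab : a ≠ b) {k : ℕ} {r t : List A}
    (h : paddedWord a b k w = r ++ t) (hr : r ≠ []) (ht : t <+: paddedWord a b k w) :
    w <:+: r := by
  set M := k + w.length
  have hw : w <:+: replicate k a ++ w := (suffix_append _ _).isInfix
  by_cases hrM : M ≤ r.length
  · refine hw.trans (prefix_of_prefix_length_le (l₃ := paddedWord a b k w) ?_ ?_ ?_).isInfix
    · simp [paddedWord, append_assoc]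
    · exact h ▸ prefix_append r t
    · simpa using hrM
  exfalso
  have hr₀ := length_pos_iff.mpr hr
  have hlen : (paddedWord a b k w).length = 3 * M := by simp [paddedWord, M]; omega
  have htr : t = (paddedWord a b k w).drop r.length := by rw [h, drop_left]
  have hti : 2 * M - 1 < t.length := by simp [htr, hlen]; omega
  have key := ht.getElem hti
  simp only [htr, getElem_drop] at key
  revert key
  simp only [paddedWord, getElem_append, getElem_replicate]
  grind

end Extension

section Maximal
variable {A : Type*} {X : Set (List A)}

lemma isCode_iff_forall_finite :
    IsCode X ↔ ∀ Y ⊆ X, Y.Finite → IsCode Y := by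
  refine ⟨fun hX Y hYX _ => isCode_of_subset hYX hX, fun h l m hl hm => ?_⟩
  refine h {x | x ∈ l ++ m} (fun x hx => ?_) (l ++ m).finite_toSet l m
    (fun x hx => mem_append_left m hx) (fun x hx => mem_append_right l hx)
  rcases mem_append.mp hx with hx | hx
  exacts [hl x hx, hm x hx]

lemma Set.pairwise_iff_forall_finite {α : Type*} {r : α → α → Prop} {s : Set α} :
    s.Pairwise r ↔ ∀ t ⊆ s, t.Finite → t.Pairwise r := by
  refine ⟨fun hs t hts _ => hs.mono hts, fun h x hx y hy hxy => ?_⟩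
  exact h {x, y} (Set.insert_subset hx (Set.singleton_subset_iff.mpr hy))
    (Set.toFinite _) (by simp) (by simp) hxy

lemma isOfFiniteCharacter_isCode_pairwise (r : List A → List A → Prop) :
    Order.IsOfFiniteCharacter {Y : Set (List A) | IsCode Y ∧ Y.Pairwise r} := by
  intro X
  change IsCode X ∧ X.Pairwise r ↔ ∀ Y ⊆ X, Y.Finite → IsCode Y ∧ Y.Pairwise r
  rw [isCode_iff_forall_finite, Set.pairwise_iff_forall_finite]
  exact ⟨fun h Y hYX hY => ⟨h.1 Y hYX hY, h.2 Y hYX hY⟩,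
    fun h => ⟨fun Y hYX hY => (h Y hYX hY).1, fun Y hYX hY => (h Y hYX hY).2⟩⟩

lemma exists_maximal_pairwise_isCode {r : List A → List A → Prop}
    (hX : IsCode X) (hXr : X.Pairwise r) :
    ∃ Y, X ⊆ Y ∧ IsCode Y ∧ Y.Pairwise r ∧
      ∀ Z, IsCode Z → Z.Pairwise r → Y ⊆ Z → Z = Y := by
  obtain ⟨Y, hXY, hYmax⟩ := (isOfFiniteCharacter_isCode_pairwise r).exists_maximal ⟨hX, hXr⟩
  exact ⟨Y, hXY, hYmax.prop.1, hYmax.prop.2,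
    fun Z hZ hZr hYZ => (hYmax.le_of_ge ⟨hZ, hZr⟩ hYZ).antisymm hYZ⟩

lemma exists_isCode_insert_forall_lt_dF {a b : A} (hab : a ≠ b) (hX : IsCode X) {w : List A}
    (hw : ∀ l : List (List A), (∀ x ∈ l, x ∈ X) → ¬ w <:+: l.flatten) (k : ℕ) :
    ∃ y ∉ X, IsCode (insert y X) ∧ ∀ x ∈ X, k < dF y x := by
  have hwx : ∀ x ∈ X, ¬ w <:+: x := fun x hx => by simpa using hw [x] (by simpa using hx)
  refine ⟨paddedWord a b k w, fun hy => hwx _ hy (infix_paddedWord a b k w),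
    isCode_insert hX hw (infix_paddedWord a b k w) fun r t => infix_of_paddedWord_eq_append hab,
    fun x hx => lt_dF_of_forall_infix fun f hfy hfx => ?_⟩
  by_contra! hlen
  exact hwx x hx ((infix_of_infix_paddedWord hfy hlen).trans hfx)

lemma isCompleteSet_of_maximal [Nontrivial A] {k : ℕ} (hX : IsCode X)
    (hXk : X.Pairwise fun x y => k < dF x y)
    (hmax : ∀ Y, IsCode Y → Y.Pairwise (fun x y => k < dF x y) → X ⊆ Y → Y = X) :
    IsCompleteSet X := by
  by_contra hc
  simp only [IsCompleteSet, not_forall, not_exists, not_and] at hc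
  obtain ⟨w, hw⟩ := hc
  obtain ⟨a, b, hab⟩ := exists_pair_ne A
  obtain ⟨y, hyX, hyc, hyk⟩ := exists_isCode_insert_forall_lt_dF hab hX hw k
  have hXy := hmax (insert y X) hyc
    (hXk.insert fun x hx _ => ⟨hyk x hx, dF_comm x y ▸ hyk x hx⟩) (Set.subset_insert y X)
  exact hyX (hXy ▸ Set.mem_insert y X)

end Maximal

theorem stmt_16_general {A : Type*} [Fintype A] (hA : 2 ≤ Fintype.card A)
    (k : ℕ) (X : Set (List A))
    (hreg : IsRegularLang X) (hcode : IsCode X)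
    (hind : ¬ ∃ x ∈ X, ∃ y ∈ X, x ≠ y ∧ dF x y ≤ k) :
    (((∀ Y : Set (List A), IsCode Y → (¬ ∃ x ∈ Y, ∃ y ∈ Y, x ≠ y ∧ dF x y ≤ k) →
        X ⊆ Y → Y = X) ↔ IsCompleteSet X) ∧
      (IsCompleteSet X ↔ mu A X = 1)) ∧
    (∃ Y : Set (List A), X ⊆ Y ∧ IsCode Y ∧
      (¬ ∃ x ∈ Y, ∃ y ∈ Y, x ≠ y ∧ dF x y ≤ k) ∧
      (∀ Z : Set (List A), IsCode Z →
        (¬ ∃ x ∈ Z, ∃ y ∈ Z, x ≠ y ∧ dF x y ≤ k) → Y ⊆ Z → Z = Y)) := by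
  have : Nontrivial A := Fintype.one_lt_card_iff_nontrivial.mp hA
  simp only [← pairwise_lt_dF_iff] at hind ⊢
  have hmax_complete := isCompleteSet_of_maximal hcode hind
  have hcomplete_mu := mu_eq_one_of_isCompleteSet hreg hcode
  have hmu_max : mu A X = 1 → ∀ Y, IsCode Y → Y.Pairwise (fun x y => k < dF x y) → X ⊆ Y →
      Y = X := fun h Y hY _ hXY => eq_of_mu_eq_one_of_subset h hY hXY
  exact ⟨⟨⟨hmax_complete, hmu_max ∘ hcomplete_mu⟩, hcomplete_mu, hmax_complete ∘ hmu_max⟩,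
    exists_maximal_pairwise_isCode hcode hind⟩

/-- for a regular `F̲_k`-independent code `X`, maximality among
`F̲_k`-independent codes, completeness, and `μ(X) = 1` are pairwise equivalent;
moreover `X` embeds in a maximal `F̲_k`-independent code. -/
theorem stmt_16 {A : Type*} [Fintype A] (hA : 2 ≤ Fintype.card A)
    (k : ℕ) (hk : 1 ≤ k) (X : Set (List A))
    (hreg : IsRegularLang X) (hcode : IsCode X)
    (hind : ¬ ∃ x ∈ X, ∃ y ∈ X, x ≠ y ∧ dF x y ≤ k) :
    (((∀ Y : Set (List A), IsCode Y → (¬ ∃ x ∈ Y, ∃ y ∈ Y, x ≠ y ∧ dF x y ≤ k) →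
        X ⊆ Y → Y = X) ↔ IsCompleteSet X) ∧
      (IsCompleteSet X ↔ mu A X = 1)) ∧
    (∃ Y : Set (List A), X ⊆ Y ∧ IsCode Y ∧
      (¬ ∃ x ∈ Y, ∃ y ∈ Y, x ≠ y ∧ dF x y ≤ k) ∧
      (∀ Z : Set (List A), IsCode Z →
        (¬ ∃ x ∈ Z, ∃ y ∈ Z, x ≠ y ∧ dF x y ≤ k) → Y ⊆ Z → Z = Y)) :=
  stmt_16_general hA k X hreg hcode hind
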